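/- If a maximal ancestral graph (MAG) G over a finite vertex set V satisfies the Markov and Faithfulness assumptions with an independence model I over V, then G is NoE-minimal with I: no MAG over V with strictly fewer edges than G satisfies the Markov assumption with I. -/

import Mathlib

/-- The kind of an edge as traversed from left to right along a path:
forward directed (`a → b`), backward directed (`a ← b`), or bidirected (`a ↔ b`). -/
inductive EKind : Type
  | fwd | bwd | bi
deriving DecidableEq, Inhabited

/-- The edge kind has an arrowhead at its left endpoint. -/
def EKind.arrowLeft : EKind → Prop
  | .fwd => False
  | .bwd => True
  | .bi  => True

/-- The edge kind has an arrowhead at its right endpoint. -/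
def EKind.arrowRight : EKind → Prop
  | .fwd => True
  | .bwd => False
  | .bi  => True

/-- A mixed graph over a vertex type `V`: a set of directed edges and a set of
bidirected edges between distinct vertices. -/
structure MGraph (V : Type) where
  dir : V → V → Prop
  bidir : V → V → Prop
  dir_irrefl : ∀ x, ¬ dir x x
  bidir_irrefl : ∀ x, ¬ bidir x x
  bidir_symm : ∀ x y, bidir x y → bidir y x

namespace MGraph

variable {V : Type}

/-- There is an edge of the given kind (read left-to-right) between `a` and `b`. -/
def edgeKind (G : MGraph V) : EKind → V → V → Prop
  | .fwd, a, b => G.dir a b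
  | .bwd, a, b => G.dir b a
  | .bi,  a, b => G.bidir a b

/-- `x` is an ancestor of `y`: `x = y` or there is a directed path from `x` to `y`. -/
def Ancestor (G : MGraph V) : V → V → Prop := Relation.ReflTransGen G.dir

/-- The graph has no directed cycle. -/
def Acyclic (G : MGraph V) : Prop := ∀ x y, G.Ancestor x y → G.Ancestor y x → x = y

/-- `x` and `y` are adjacent: some edge joins them. -/
def Adj (G : MGraph V) (x y : V) : Prop := G.dir x y ∨ G.dir y x ∨ G.bidir x y

/-- A path between `x` and `y`: a sequence of distinct vertices starting at `x` and
ending at `y`, together with, for each consecutive pair, an edge of the graph between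
them (recorded by its kind). -/
structure Path (G : MGraph V) (x y : V) : Type where
  verts : List V
  kinds : List EKind
  len_eq : verts.length = kinds.length + 1
  nodup : verts.Nodup
  head_eq : verts.head? = some x
  last_eq : verts.getLast? = some y
  valid : ∀ i, i < kinds.length →
    G.edgeKind (kinds.getD i .fwd) (verts.getD i x) (verts.getD (i + 1) x)

namespace Path

variable {G : MGraph V} {x y : V}

/-- The `i`-th vertex on the path. -/
def vert (p : G.Path x y) (i : ℕ) : V := p.verts.getD i x

/-- The kind of the `i`-th edge on the path. -/
def kind (p : G.Path x y) (i : ℕ) : EKind := p.kinds.getD i .fwd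

/-- The (non-endpoint) vertex at position `i` is a collider on the path: both incident
edges have an arrowhead at it. -/
def ColliderAt (p : G.Path x y) (i : ℕ) : Prop :=
  1 ≤ i ∧ i + 1 < p.verts.length ∧
    (p.kind (i - 1)).arrowRight ∧ (p.kind i).arrowLeft

/-- The path is m-connecting given `Z`: every non-collider on it is not in `Z` and
every collider on it has a descendant in `Z`. -/
def MConn (p : G.Path x y) (Z : Set V) : Prop :=
  ∀ i, 1 ≤ i → i + 1 < p.verts.length →
    (p.ColliderAt i → ∃ d ∈ Z, G.Ancestor (p.vert i) d) ∧
    (¬ p.ColliderAt i → p.vert i ∉ Z)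

/-- The path is an inducing path: every non-endpoint vertex is a collider on the path
and an ancestor of one of the endpoints. -/
def Inducing (p : G.Path x y) : Prop :=
  ∀ i, 1 ≤ i → i + 1 < p.verts.length →
    p.ColliderAt i ∧ (G.Ancestor (p.vert i) x ∨ G.Ancestor (p.vert i) y)

end Path

/-- Distinct vertices `x, y ∉ Z` are m-separated by `Z`: no path between them is
m-connecting given `Z`. -/
def MSep (G : MGraph V) (x y : V) (Z : Set V) : Prop :=
  x ≠ y ∧ x ∉ Z ∧ y ∉ Z ∧
    (∀ p : G.Path x y, ¬ p.MConn Z) ∧ (∀ p : G.Path y x, ¬ p.MConn Z)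

/-- Sets `A` and `B` are m-separated by `C`: every `a ∈ A` and `b ∈ B` are. -/
def MSepSets (G : MGraph V) (A B C : Set V) : Prop :=
  ∀ a ∈ A, ∀ b ∈ B, G.MSep a b C

/-- `x` and `y` are virtually adjacent: there is an inducing path between them. -/
def VAdj (G : MGraph V) (x y : V) : Prop :=
  x ≠ y ∧ ((∃ p : G.Path x y, p.Inducing) ∨ (∃ p : G.Path y x, p.Inducing))

/-- The graph `M` corresponding to an SMCM `S`: distinct `x, y` are adjacent in `M`
iff there is an inducing path between them in `S`, with the edge oriented `x → y` if
`x` is an ancestor of `y` in `S`, `y → x` if `y` is an ancestor of `x` in `S`, and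
`x ↔ y` otherwise. -/
def mag (S : MGraph V) : MGraph V where
  dir x y := S.VAdj x y ∧ S.Ancestor x y
  bidir x y := S.VAdj x y ∧ ¬ S.Ancestor x y ∧ ¬ S.Ancestor y x
  dir_irrefl := fun x h => h.1.1 rfl
  bidir_irrefl := fun x h => h.1.1 rfl
  bidir_symm := fun _ _ h => ⟨⟨h.1.1.symm, h.1.2.symm⟩, h.2.2, h.2.1⟩

/-- An ancestral graph: at most one edge between any two vertices, and whenever `x`
is an ancestor of `y`, no edge between `x` and `y` has an arrowhead at `x`. -/
def Ancestral (G : MGraph V) : Prop :=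
  (∀ x y, G.Ancestor x y → x ≠ y → ¬ G.dir y x ∧ ¬ G.bidir x y) ∧
  (∀ x y, ¬ (G.dir x y ∧ G.bidir x y))

/-- A maximal ancestral graph: an ancestral graph in which every pair of non-adjacent
vertices is m-separated by some subset of the remaining vertices. -/
def IsMAG (G : MGraph V) : Prop :=
  G.Ancestral ∧ ∀ x y : V, x ≠ y → ¬ G.Adj x y →
    ∃ Z : Set V, x ∉ Z ∧ y ∉ Z ∧ G.MSep x y Z

/-- The number of edges of a mixed graph (directed edges plus bidirected edges, the
latter counted as unordered pairs). -/
noncomputable def numEdges (G : MGraph V) : ℕ :=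
  {p : V × V | G.dir p.1 p.2}.ncard +
    {e : Sym2 V | ∃ a b, e = s(a, b) ∧ G.bidir a b}.ncard

/-- The number of virtual adjacencies (unordered pairs of virtually adjacent
vertices). -/
noncomputable def numVAdj (G : MGraph V) : ℕ :=
  {e : Sym2 V | ∃ a b, e = s(a, b) ∧ G.VAdj a b}.ncard

/-- The number of m-separation statements entailed by the graph: triples `(X, Y, Z)`
of pairwise disjoint subsets with `X, Y` nonempty such that `X` and `Y` are
m-separated by `Z`. -/
noncomputable def numSep (G : MGraph V) : ℕ :=
  {t : Set V × Set V × Set V | t.1.Nonempty ∧ t.2.1.Nonempty ∧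
    Disjoint t.1 t.2.1 ∧ Disjoint t.1 t.2.2 ∧ Disjoint t.2.1 t.2.2 ∧
    G.MSepSets t.1 t.2.1 t.2.2}.ncard

/-- An unshielded triple `⟨a, z, b⟩`: `a, z` adjacent, `z, b` adjacent, `a, b` not
adjacent. -/
def UnshieldedTriple (G : MGraph V) (a z b : V) : Prop :=
  a ≠ z ∧ z ≠ b ∧ a ≠ b ∧ G.Adj a z ∧ G.Adj z b ∧ ¬ G.Adj a b

/-- Some edge between `a` and `z` has an arrowhead at `z`. -/
def ArrowAt (G : MGraph V) (a z : V) : Prop := G.dir a z ∨ G.bidir a z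

/-- An unshielded collider: an unshielded triple whose two edges both have arrowheads
at the middle vertex. -/
def UnshieldedCollider (G : MGraph V) (a z b : V) : Prop :=
  G.UnshieldedTriple a z b ∧ G.ArrowAt a z ∧ G.ArrowAt b z

/-- A discriminating path for `⟨X, Z, Y⟩`: a path `(V₀, V₁, ..., Vₘ = X, Z, Y)` with
`m ≥ 1` such that `V₀` and `Y` are not adjacent and every `Vᵢ` with `1 ≤ i ≤ m` is a
collider on the path and a parent of `Y`. -/
def IsDiscriminating (G : MGraph V) {v₀ w : V} (p : G.Path v₀ w) (X Z Y : V) : Prop :=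
  4 ≤ p.verts.length ∧ w = Y ∧
  p.vert (p.verts.length - 3) = X ∧
  p.vert (p.verts.length - 2) = Z ∧
  v₀ ≠ Y ∧ ¬ G.Adj v₀ Y ∧
  ∀ i, 1 ≤ i → i ≤ p.verts.length - 3 → p.ColliderAt i ∧ G.dir (p.vert i) Y

end MGraph

/-- An independence model over `V`: a set of triples `(X, Y, Z)` of pairwise disjoint
subsets of `V` with `X, Y` nonempty. -/
def IsIndepModel {V : Type} (I : Set (Set V × Set V × Set V)) : Prop :=
  ∀ t ∈ I, t.1.Nonempty ∧ t.2.1.Nonempty ∧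
    Disjoint t.1 t.2.1 ∧ Disjoint t.1 t.2.2 ∧ Disjoint t.2.1 t.2.2

/-- `G` satisfies the Markov assumption with `I`: every triple `(X, Y, Z)` such that
`X` and `Y` are m-separated by `Z` in `G` belongs to `I`. -/
def Markov {V : Type} (G : MGraph V) (I : Set (Set V × Set V × Set V)) : Prop :=
  ∀ X Y Z : Set V, X.Nonempty → Y.Nonempty →
    Disjoint X Y → Disjoint X Z → Disjoint Y Z →
    G.MSepSets X Y Z → (X, Y, Z) ∈ I

/-- `G` satisfies the Faithfulness assumption with `I`: every triple in `I` is
m-separated in `G`. -/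
def Faithful {V : Type} (G : MGraph V) (I : Set (Set V × Set V × Set V)) : Prop :=
  ∀ X Y Z : Set V, (X, Y, Z) ∈ I → G.MSepSets X Y Z

/-- `G` satisfies the Adjacency-faithfulness assumption with `I`: for adjacent
distinct `x, y` and any `Z ⊆ V ∖ {x, y}`, the triple `({x}, {y}, Z)` is not in `I`. -/
def AdjFaithful {V : Type} (G : MGraph V) (I : Set (Set V × Set V × Set V)) : Prop :=
  ∀ x y : V, x ≠ y → G.Adj x y →
    ∀ Z : Set V, x ∉ Z → y ∉ Z → ({x}, {y}, Z) ∉ I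

/-- `G` satisfies the V-adjacency-faithfulness assumption with `I`: for virtually
adjacent `x, y` and any `Z ⊆ V ∖ {x, y}`, the triple `({x}, {y}, Z)` is not in `I`. -/
def VAdjFaithful {V : Type} (G : MGraph V) (I : Set (Set V × Set V × Set V)) : Prop :=
  ∀ x y : V, G.VAdj x y →
    ∀ Z : Set V, x ∉ Z → y ∉ Z → ({x}, {y}, Z) ∉ I

/-- A MAG `G` is NoE-minimal with `I`: no MAG over `V` with strictly fewer edges
satisfies the Markov assumption with `I`. -/
def NoEMinimalMAG {V : Type} (G : MGraph V) (I : Set (Set V × Set V × Set V)) : Prop :=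
  ¬ ∃ G' : MGraph V, G'.IsMAG ∧ G'.numEdges < G.numEdges ∧ Markov G' I

/-- An SMCM `G` is NoE-minimal with `I`: no SMCM over `V` with strictly fewer edges
satisfies the Markov assumption with `I`. -/
def NoEMinimalSMCM {V : Type} (G : MGraph V) (I : Set (Set V × Set V × Set V)) : Prop :=
  ¬ ∃ G' : MGraph V, G'.Acyclic ∧ G'.numEdges < G.numEdges ∧ Markov G' I

/-- An SMCM `G` is V-adjacency-minimal with `I`: no SMCM over `V` with strictly fewer
virtual adjacencies satisfies the Markov assumption with `I`. -/
def VAdjMinimal {V : Type} (G : MGraph V) (I : Set (Set V × Set V × Set V)) : Prop :=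
  ¬ ∃ G' : MGraph V, G'.Acyclic ∧ G'.numVAdj < G.numVAdj ∧ Markov G' I

/-- A MAG `G` is NoI-minimal with `I`: no MAG over `V` entailing strictly more
m-separation statements satisfies the Markov assumption with `I`. -/
def NoIMinimalMAG {V : Type} (G : MGraph V) (I : Set (Set V × Set V × Set V)) : Prop :=
  ¬ ∃ G' : MGraph V, G'.IsMAG ∧ G.numSep < G'.numSep ∧ Markov G' I

/-- An SMCM `G` is NoI-minimal with `I`: no SMCM over `V` entailing strictly more
m-separation statements satisfies the Markov assumption with `I`. -/
def NoIMinimalSMCM {V : Type} (G : MGraph V) (I : Set (Set V × Set V × Set V)) : Prop :=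
  ¬ ∃ G' : MGraph V, G'.Acyclic ∧ G.numSep < G'.numSep ∧ Markov G' I


namespace MGraph

variable {V : Type} {G : MGraph V} {x y : V}

theorem Adj.ne (h : G.Adj x y) : x ≠ y := by
  rintro rfl
  rcases h with h | h | h
  · exact G.dir_irrefl x h
  · exact G.dir_irrefl x h
  · exact G.bidir_irrefl x h

theorem Ancestral.not_dir_of_dir (hG : G.Ancestral) (h : G.dir x y) : ¬ G.dir y x :=
  (hG.1 x y (.single h) fun e => G.dir_irrefl x (e ▸ h)).1

theorem Ancestral.not_bidir_of_dir (hG : G.Ancestral) (h : G.dir x y) : ¬ G.bidir x y :=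
  (hG.1 x y (.single h) fun e => G.dir_irrefl x (e ▸ h)).2

theorem Adj.exists_mConn (h : G.Adj x y) (Z : Set V) : ∃ p : G.Path x y, p.MConn Z := by
  obtain ⟨k, hk⟩ : ∃ k : EKind, G.edgeKind k x y := by
    rcases h with h | h | h
    · exact ⟨.fwd, h⟩
    · exact ⟨.bwd, h⟩
    · exact ⟨.bi, h⟩
  refine ⟨⟨[x, y], [k], rfl, by simp [h.ne], rfl, rfl, ?_⟩, ?_⟩
  · intro i hi
    obtain rfl : i = 0 := by simpa using hi
    simpa using hk
  · intro i h1 h2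
    simp only [List.length_cons, List.length_nil] at h2
    omega

theorem Adj.not_mSep (h : G.Adj x y) (Z : Set V) : ¬ G.MSep x y Z := fun hsep =>
  let ⟨p, hp⟩ := h.exists_mConn Z
  hsep.2.2.2.1 p hp

def adjSet (G : MGraph V) : Set (Sym2 V) :=
  {e | ∃ a b, e = s(a, b) ∧ G.Adj a b}

def dirSet (G : MGraph V) : Set (Sym2 V) :=
  {e | ∃ a b, e = s(a, b) ∧ G.dir a b}

theorem Ancestral.ncard_dir_eq_ncard_dirSet (hG : G.Ancestral) :
    {p : V × V | G.dir p.1 p.2}.ncard = G.dirSet.ncard := by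
  have himage : (fun p : V × V => s(p.1, p.2)) '' {p | G.dir p.1 p.2} = G.dirSet := by
    ext e
    constructor
    · rintro ⟨⟨a, b⟩, hab, rfl⟩
      exact ⟨a, b, rfl, hab⟩
    · rintro ⟨a, b, rfl, hab⟩
      exact ⟨(a, b), hab, rfl⟩
  rw [← himage, Set.InjOn.ncard_image]
  rintro ⟨a, b⟩ hab ⟨c, d⟩ hcd h
  rcases Sym2.eq_iff.mp h with ⟨rfl, rfl⟩ | ⟨rfl, rfl⟩
  · rfl
  · exact absurd hcd (hG.not_dir_of_dir hab)

/-- Ancestrality forbids two edges between the same vertices, including `x → y` with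
`y → x`. -/
theorem Ancestral.numEdges_eq_ncard_adjSet [Finite V] (hG : G.Ancestral) :
    G.numEdges = G.adjSet.ncard := by
  set B : Set (Sym2 V) := {e | ∃ a b, e = s(a, b) ∧ G.bidir a b}
  have hdisj : Disjoint G.dirSet B := by
    rw [Set.disjoint_left]
    rintro e ⟨a, b, rfl, hab⟩ ⟨c, d, hcd, hbi⟩
    rcases Sym2.eq_iff.mp hcd with ⟨rfl, rfl⟩ | ⟨rfl, rfl⟩
    · exact hG.not_bidir_of_dir hab hbi
    · exact hG.not_bidir_of_dir hab (G.bidir_symm _ _ hbi)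
  have hunion : G.dirSet ∪ B = G.adjSet := by
    ext e
    constructor
    · rintro (⟨a, b, rfl, h⟩ | ⟨a, b, rfl, h⟩)
      · exact ⟨a, b, rfl, Or.inl h⟩
      · exact ⟨a, b, rfl, Or.inr (Or.inr h)⟩
    · rintro ⟨a, b, rfl, h | h | h⟩
      · exact Or.inl ⟨a, b, rfl, h⟩
      · exact Or.inl ⟨b, a, Sym2.eq_swap, h⟩
      · exact Or.inr ⟨a, b, rfl, h⟩
  rw [numEdges, hG.ncard_dir_eq_ncard_dirSet, ← Set.ncard_union_eq hdisj, hunion]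

end MGraph

section

variable {V : Type} {I : Set (Set V × Set V × Set V)} {G G' : MGraph V} {x y : V}

theorem Markov.mem_of_mSep (hG : Markov G I) {Z : Set V} (hsep : G.MSep x y Z) :
    (({x} : Set V), ({y} : Set V), Z) ∈ I := by
  refine hG {x} {y} Z (Set.singleton_nonempty x) (Set.singleton_nonempty y)
    (Set.disjoint_singleton.mpr hsep.1) (Set.disjoint_singleton_left.mpr hsep.2.1)
    (Set.disjoint_singleton_left.mpr hsep.2.2.1) ?_
  rintro a rfl b rfl
  exact hsep

theorem Faithful.mSep_of_markov (hG : Faithful G I) (hG' : Markov G' I) {Z : Set V}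
    (hsep : G'.MSep x y Z) : G.MSep x y Z :=
  hG {x} {y} Z (hG'.mem_of_mSep hsep) x rfl y rfl

/-- Maximality of `G'` turns a missing adjacency into a separation, which would then hold
in `G` as well, and an edge of `G` cannot be separated. -/
theorem Faithful.adjSet_subset_of_markov (hG : Faithful G I) (hG' : Markov G' I)
    (hmax : G'.IsMAG) : G.adjSet ⊆ G'.adjSet := by
  rintro _ ⟨x, y, rfl, hadj⟩
  by_contra hnot
  obtain ⟨Z, -, -, hsep⟩ := hmax.2 x y hadj.ne fun h => hnot ⟨x, y, rfl, h⟩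
  exact hadj.not_mSep Z (hG.mSep_of_markov hG' hsep)

end

theorem statement_11_general {V : Type} [Fintype V]
    (G : MGraph V) (hG : G.IsMAG)
    (I : Set (Set V × Set V × Set V))
    (hFaithful : Faithful G I) :
    NoEMinimalMAG G I := by
  rintro ⟨G', hG', hlt, hMarkov'⟩
  rw [hG.1.numEdges_eq_ncard_adjSet, hG'.1.numEdges_eq_ncard_adjSet] at hlt
  exact hlt.not_ge (Set.ncard_le_ncard (hFaithful.adjSet_subset_of_markov hMarkov' hG'))

/-- If a MAG `G` over a finite vertex set satisfies the Markov and
Faithfulness assumptions with an independence model `I`, then `G` is NoE-minimal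
with `I`. -/
theorem statement_11 {V : Type} [Fintype V] [DecidableEq V]
    (G : MGraph V) (hG : G.IsMAG)
    (I : Set (Set V × Set V × Set V)) (hI : IsIndepModel I)
    (hMarkov : Markov G I) (hFaithful : Faithful G I) :
    NoEMinimalMAG G I :=
  statement_11_general G hG I hFaithful
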